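/- Let n ≥ 2, J > 0 and H = 0 (so the model is invariant under the global spin flip σ ↦ −σ), and let P̃ be the (n+1)×(n+1) magnetization chain matrix of the mean-field Glauber dynamics. Let λ₂ be the second-largest eigenvalue of the full Glauber chain, and let f = (f_0,…,f_n) be an increasing eigenvector of P̃ with eigenvalue λ₂. Then f is antisymmetric: f_k = −f_{n−k} for all 0 ≤ k ≤ n. Consequently f_k ≤ 0 for all k ≤ n/2 and f_k ≥ 0 for all k ≥ n/2. -/

import Mathlib

/-!
At `H = 0` the flip `k ↦ n - k` is a symmetry of `P̃`, so `f ∘ rev` is again a `λ`-eigenvector.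
As `P̃` is tridiagonal with positive superdiagonal, an eigenvector is determined by its first
entry, whence `f_n • f = f_0 • (f ∘ rev)`. At `k = n` this reads `f_n² = f_0²`, and since `f` is
increasing and not constant, `f_n = -f_0 > 0`; dividing by `f_0` gives `f = -(f ∘ rev)`. The signs
then follow from monotonicity, as `k ≤ n - k` exactly when `2k ≤ n`.
-/

/-- The spin value of a site: `+1` for `true`, `-1` for `false`. -/
def spin (b : Bool) : ℝ := if b then 1 else -1

/-- The rate at which the Glauber dynamics for the mean-field Ising model on the
complete graph with `n` vertices, coupling `J` and uniform external field `H`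
flips the spin at vertex `x` of the configuration `σ`:
`(1/n) · 1/(1 + exp(−2 σ'_x (J Σ_{y≠x} σ_y + H)))` where `σ'_x = −σ_x`. -/
noncomputable def flipRate (n : ℕ) (J H : ℝ) (σ : Fin n → Bool) (x : Fin n) : ℝ :=
  (1 / (n : ℝ)) *
    (1 + Real.exp (-2 * spin (!σ x) *
      (J * ∑ y ∈ Finset.univ.erase x, spin (σ y) + H)))⁻¹

/-- The transition matrix of the Glauber dynamics for the mean-field Ising model on
the complete graph with `n` vertices, coupling `J` and uniform external field `H`.
Transitions change at most one coordinate. -/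
noncomputable def glauberP (n : ℕ) (J H : ℝ) : Matrix (Fin n → Bool) (Fin n → Bool) ℝ :=
  fun σ σ' =>
    if σ' = σ then 1 - ∑ x : Fin n, flipRate n J H σ x
    else ∑ x : Fin n, if σ' = Function.update σ x (!σ x) then flipRate n J H σ x else 0

/-- `μ` is a (real) eigenvalue of the matrix `M`. -/
def IsEigenvalue {m : Type*} [Fintype m] (M : Matrix m m ℝ) (μ : ℝ) : Prop :=
  ∃ v : m → ℝ, v ≠ 0 ∧ M.mulVec v = μ • v

/-- `μ` is the second-largest eigenvalue of the transition matrix `M` whose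
eigenvalues are real and satisfy `1 = λ₁ > λ₂ ≥ … ≥ λ_N`: it is the largest
eigenvalue different from `1`. -/
def IsSecondEigenvalue {m : Type*} [Fintype m] (M : Matrix m m ℝ) (μ : ℝ) : Prop :=
  IsEigenvalue M μ ∧ μ ≠ 1 ∧ ∀ μ' : ℝ, IsEigenvalue M μ' → μ' ≠ 1 → μ' ≤ μ


/-- Upward transition rate of the magnetization chain:
`P̃_{k,k+1} = ((n−k)/n) · 1/(1 + exp((n−2k−1)·2J − 2H))`. -/
noncomputable def pUp (n : ℕ) (J H : ℝ) (k : ℕ) : ℝ :=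
  (((n : ℝ) - k) / n) * (1 + Real.exp (((n : ℝ) - 2 * k - 1) * (2 * J) - 2 * H))⁻¹

/-- Downward transition rate of the magnetization chain:
`P̃_{k,k−1} = (k/n) · 1/(1 + exp(−(n−2k+1)·2J + 2H))`. -/
noncomputable def pDown (n : ℕ) (J H : ℝ) (k : ℕ) : ℝ :=
  ((k : ℝ) / n) * (1 + Real.exp (-((n : ℝ) - 2 * k + 1) * (2 * J) + 2 * H))⁻¹

/-- The `(n+1)×(n+1)` tridiagonal transition matrix of the magnetization chain
associated to the mean-field Glauber dynamics.  (Note `pDown n J H 0 = 0` and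
`pUp n J H n = 0`, implementing the conventions `P̃_{0,−1} = P̃_{n,n+1} = 0`.) -/
noncomputable def magP (n : ℕ) (J H : ℝ) : Matrix (Fin (n + 1)) (Fin (n + 1)) ℝ :=
  fun k l =>
    if (l : ℕ) = (k : ℕ) + 1 then pUp n J H k
    else if (k : ℕ) = (l : ℕ) + 1 then pDown n J H k
    else if k = l then 1 - pDown n J H k - pUp n J H k
    else 0

namespace Matrix

variable {R : Type*} [CommRing R] [NoZeroDivisors R] {n : ℕ}
  {M : Matrix (Fin (n + 1)) (Fin (n + 1)) R}

-- Row `i` of `M *ᵥ v = μ • v` determines `v (i + 1)` from `v 0, …, v i`.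
theorem eq_zero_of_mulVec_eq_smul_of_apply_zero
    (hM : ∀ i j : Fin (n + 1), (i : ℕ) + 1 < j → M i j = 0)
    (hsup : ∀ i : Fin n, M i.castSucc i.succ ≠ 0) {μ : R} {v : Fin (n + 1) → R}
    (hv : M *ᵥ v = μ • v) (h0 : v 0 = 0) : v = 0 := by
  suffices h : ∀ i : Fin (n + 1), ∀ j ≤ i, v j = 0 from funext fun i => h i i le_rfl
  intro i
  induction i using Fin.induction with
  | zero => intro j hj; rwa [nonpos_iff_eq_zero.mp hj]
  | succ i ih =>
    have hrow : M i.castSucc i.succ * v i.succ = 0 := by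
      have hi := congrFun hv i.castSucc
      rw [mulVec, dotProduct, Finset.sum_eq_single i.succ] at hi
      · simpa [ih _ le_rfl] using hi
      · intro j _ hj
        rcases le_or_gt j i.castSucc with hji | hij
        · rw [ih j hji, mul_zero]
        · rw [hM _ _ ?_, zero_mul]
          simp only [Fin.lt_def, Fin.val_castSucc, ne_eq, Fin.ext_iff, Fin.val_succ] at hij hj ⊢
          omega
      · simp
    intro j hj
    rcases hj.lt_or_eq with hj | rfl
    · exact ih j (Fin.le_castSucc_iff.mpr hj)
    · exact (mul_eq_zero.mp hrow).resolve_left (hsup i)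

theorem smul_eq_smul_of_mulVec_eq_smul
    (hM : ∀ i j : Fin (n + 1), (i : ℕ) + 1 < j → M i j = 0)
    (hsup : ∀ i : Fin n, M i.castSucc i.succ ≠ 0) {μ : R} {v w : Fin (n + 1) → R}
    (hv : M *ᵥ v = μ • v) (hw : M *ᵥ w = μ • w) : w 0 • v = v 0 • w := by
  refine sub_eq_zero.mp (eq_zero_of_mulVec_eq_smul_of_apply_zero hM hsup (μ := μ) ?_ ?_)
  · rw [mulVec_sub, mulVec_smul, mulVec_smul, hv, hw, smul_sub, smul_comm μ, smul_comm μ]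
  · simp [mul_comm]

end Matrix

open scoped Matrix

theorem pUp_pos {n k : ℕ} (J H : ℝ) (hk : k < n) : 0 < pUp n J H k := by
  have hkn : (k : ℝ) < n := by exact_mod_cast hk
  unfold pUp
  exact mul_pos (div_pos (by linarith) (by linarith [k.cast_nonneg (α := ℝ)])) (by positivity)

theorem pUp_sub_eq_pDown_neg {n k : ℕ} (J H : ℝ) (hk : k ≤ n) :
    pUp n J H (n - k) = pDown n J (-H) k := by
  unfold pUp pDown
  rw [Nat.cast_sub hk, show ((n : ℝ) - 2 * (n - k) - 1) * (2 * J) - 2 * H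
    = -((n : ℝ) - 2 * k + 1) * (2 * J) + 2 * -H by ring, sub_sub_cancel]

theorem pDown_sub_eq_pUp_neg {n k : ℕ} (J H : ℝ) (hk : k ≤ n) :
    pDown n J H (n - k) = pUp n J (-H) k := by
  rw [← neg_neg H, ← pUp_sub_eq_pDown_neg J (-H) (n.sub_le k), Nat.sub_sub_self hk, neg_neg]

theorem magP_eq_zero_of_succ_lt {n : ℕ} (J H : ℝ) (i j : Fin (n + 1)) (hij : (i : ℕ) + 1 < j) :
    magP n J H i j = 0 := by
  unfold magP
  rw [if_neg (by omega), if_neg (by omega), if_neg (by rintro rfl; omega)]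

theorem magP_castSucc_succ_pos {n : ℕ} (J H : ℝ) (i : Fin n) :
    0 < magP n J H i.castSucc i.succ := by
  simpa [magP] using pUp_pos J H i.isLt

theorem magP_submatrix_rev (n : ℕ) (J H : ℝ) :
    (magP n J H).submatrix Fin.rev Fin.rev = magP n J (-H) := by
  ext i j
  have hin : (i : ℕ) ≤ n := Fin.is_le i
  have hjn : (j : ℕ) ≤ n := Fin.is_le j
  simp only [Matrix.submatrix_apply, magP, Fin.val_rev, Fin.rev_inj,
    show n + 1 - (i + 1) = n - i by omega, show n + 1 - (j + 1) = n - j by omega,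
    pUp_sub_eq_pDown_neg J H hin, pDown_sub_eq_pUp_neg J H hin]
  split_ifs <;> first | omega | ring

theorem magP_mulVec_comp_rev (n : ℕ) (J H : ℝ) (v : Fin (n + 1) → ℝ) :
    magP n J (-H) *ᵥ (v ∘ Fin.rev) = (magP n J H *ᵥ v) ∘ Fin.rev := by
  rw [← magP_submatrix_rev]
  convert Matrix.submatrix_mulVec_equiv (magP n J H) (v ∘ Fin.rev) Fin.rev Fin.revPerm using 3
  all_goals ext; simp

theorem magP_increasing_eigenvector_antisymmetric_general
    (n : ℕ) (J : ℝ) (lam : ℝ)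
    (f : Fin (n + 1) → ℝ)
    (hf : (magP n J 0).mulVec f = lam • f)
    (hfinc : ∀ k : Fin n, f k.castSucc ≤ f k.succ)
    (hfnc : ¬ ∀ k l : Fin (n + 1), f k = f l) :
    (∀ k : Fin (n + 1), f k = -f k.rev) ∧
    (∀ k : Fin (n + 1), 2 * (k : ℕ) ≤ n → f k ≤ 0) ∧
    (∀ k : Fin (n + 1), n ≤ 2 * (k : ℕ) → 0 ≤ f k) := by
  have hmono : Monotone f := Fin.monotone_iff_le_succ.mpr hfinc
  have hlt : f 0 < f (Fin.last n) := by
    refine (hmono (Fin.zero_le _)).lt_of_ne fun h => hfnc fun k l => ?_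
    have hconst : ∀ k, f k = f 0 := fun k =>
      le_antisymm (h ▸ hmono k.le_last) (hmono (Fin.zero_le k))
    rw [hconst k, hconst l]
  have hflip : magP n J 0 *ᵥ (f ∘ Fin.rev) = lam • (f ∘ Fin.rev) := by
    have h := magP_mulVec_comp_rev n J 0 f
    rwa [neg_zero, hf] at h
  have hprop : ∀ k, f (Fin.last n) * f k = f 0 * f k.rev := by
    simpa [funext_iff] using Matrix.smul_eq_smul_of_mulVec_eq_smul (magP_eq_zero_of_succ_lt J 0)
      (fun i => (magP_castSucc_succ_pos J 0 i).ne') hf hflip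
  have hlast : f (Fin.last n) = -f 0 := by
    have hsq : (f (Fin.last n) - f 0) * (f (Fin.last n) + f 0) = 0 := by
      have h := hprop (Fin.last n)
      rw [Fin.rev_last] at h
      linear_combination h
    linarith [(mul_eq_zero.mp hsq).resolve_left (sub_ne_zero.mpr hlt.ne')]
  have hanti : ∀ k, f k = -f k.rev := fun k =>
    mul_left_cancel₀ (show f 0 ≠ 0 by linarith) (by linear_combination -hprop k + f k * hlast)
  refine ⟨hanti, fun k hk => ?_, fun k hk => ?_⟩
  · linarith [hanti k, hmono (show k ≤ k.rev by rw [Fin.le_def, Fin.val_rev]; omega)]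
  · linarith [hanti k, hmono (show k.rev ≤ k by rw [Fin.le_def, Fin.val_rev]; omega)]

/-- At zero external field the model is invariant under the global spin flip, and any
increasing eigenvector `f` of the magnetization chain for the second-largest
eigenvalue `λ₂` is antisymmetric: `f_k = −f_{n−k}` for all `k`.  Consequently
`f_k ≤ 0` for `k ≤ n/2` and `f_k ≥ 0` for `k ≥ n/2`.  (For `k : Fin (n+1)`,
`k.rev` is the index `n − k`.) -/
theorem magP_increasing_eigenvector_antisymmetric
    (n : ℕ) (hn : 2 ≤ n) (J : ℝ) (hJ : 0 < J) (lam : ℝ)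
    (hlam : IsSecondEigenvalue (glauberP n J 0) lam)
    (f : Fin (n + 1) → ℝ)
    (hf : (magP n J 0).mulVec f = lam • f)
    (hfinc : ∀ k : Fin n, f k.castSucc ≤ f k.succ)
    (hfnc : ¬ ∀ k l : Fin (n + 1), f k = f l) :
    (∀ k : Fin (n + 1), f k = -f k.rev) ∧
    (∀ k : Fin (n + 1), 2 * (k : ℕ) ≤ n → f k ≤ 0) ∧
    (∀ k : Fin (n + 1), n ≤ 2 * (k : ℕ) → 0 ≤ f k) :=
  magP_increasing_eigenvector_antisymmetric_general n J lam f hf hfinc hfnc
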